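/- Let n ≥ 4 and let G be a graph on n vertices such that in the K_4-bootstrap process starting from G, the graph G_{n−3} is complete and G_{n−3} ≠ G_{n−4}. Let xy be an edge of G_{n−3} \ G_{n−4}, let z be a new vertex, and let G⁺ = G + xz + yz be the graph on n + 1 vertices obtained by adding z joined to x and y. Then the K_4-bootstrap process starting from G⁺ satisfies: G⁺_{n−2} is the complete graph on n + 1 vertices and G⁺_{n−2} ≠ G⁺_{n−3}, i.e. the process stabilizes at time exactly n − 2 with complete final graph. -/

import Mathlib

/-- One step of the `K_r`-bootstrap percolation process: we add every edge `uv` for which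
there is an `r`-element vertex set `S` containing `u` and `v` such that every edge within `S`
other than `uv` is already present. -/
def bootStep {V : Type*} (r : ℕ) (G : SimpleGraph V) : SimpleGraph V where
  Adj u v := G.Adj u v ∨ (u ≠ v ∧ ∃ S : Finset V, S.card = r ∧ u ∈ S ∧ v ∈ S ∧
    ∀ x ∈ S, ∀ y ∈ S, x ≠ y → ¬((x = u ∧ y = v) ∨ (x = v ∧ y = u)) → G.Adj x y)
  symm := by
    refine ⟨fun a b h => ?_⟩
    rcases h with h | ⟨hne, S, hS, ha, hb, hall⟩
    · exact Or.inl h.symm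
    · refine Or.inr ⟨hne.symm, S, hS, hb, ha, ?_⟩
      intro x hx y hy hxy hno
      exact hall x hx y hy hxy (by tauto)
  loopless := by
    refine ⟨fun a h => ?_⟩
    rcases h with h | ⟨hne, _⟩
    · exact (G.ne_of_adj h) rfl
    · exact hne rfl

/-! While `xy` is still missing, the new vertex `z` has only the two non-adjacent neighbours
`x` and `y`, so it lies in no `4`-set that misses at most one edge: up to time `n - 3` the
process on `G⁺` is the process on `G` with the cherry `xz, yz` attached. At time `n - 3` the old
vertices form a clique, so every old vertex `u` completes `{u, x, y, z}` in one more step, while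
at time `n - 3` a vertex outside `{x, y, z}` (there is one, as `n + 1 ≥ 5`) is not yet joined
to `z`. -/

open SimpleGraph Finset

section

variable {V : Type*}

theorem bootStep_adj {r : ℕ} {G : SimpleGraph V} {u v : V} :
    (bootStep r G).Adj u v ↔
      G.Adj u v ∨ u ≠ v ∧ ∃ S : Finset V, (G ⊔ edge u v).IsNClique r S ∧ u ∈ S ∧ v ∈ S := by
  simp only [bootStep, isNClique_iff, isClique_iff, Set.Pairwise, mem_coe, sup_adj, edge_adj]
  constructor
  · rintro (h | ⟨huv, S, hS, hu, hv, hall⟩)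
    · exact .inl h
    · refine .inr ⟨huv, S, ⟨fun a ha b hb hab => ?_, hS⟩, hu, hv⟩
      by_cases h : (a = u ∧ b = v) ∨ (a = v ∧ b = u)
      · exact .inr ⟨h, hab⟩
      · exact .inl (hall a ha b hb hab h)
  · rintro (h | ⟨huv, S, ⟨hcl, hS⟩, hu, hv⟩)
    · exact .inl h
    · exact .inr ⟨huv, S, hS, hu, hv, fun a ha b hb hab h =>
        (hcl ha hb hab).resolve_right fun h' => h h'.1⟩

theorem le_bootStep (r : ℕ) (G : SimpleGraph V) : G ≤ bootStep r G :=
  fun _ _ => .inl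

theorem bootStep_monotone (r : ℕ) : Monotone (bootStep r : SimpleGraph V → SimpleGraph V) := by
  intro G H hGH u v
  simp only [bootStep_adj]
  exact Or.imp (@hGH u v) (And.imp_right fun ⟨S, hS, hu, hv⟩ =>
    ⟨S, hS.mono (sup_le_sup_right hGH _), hu, hv⟩)

theorem iterate_bootStep_mono (r : ℕ) (G : SimpleGraph V) {s t : ℕ} (hst : s ≤ t) :
    (bootStep r)^[s] G ≤ (bootStep r)^[t] G :=
  Function.monotone_iterate_of_id_le (le_bootStep r) hst G

theorem notMem_of_isNClique_four_sup_edge {K : SimpleGraph V} {x y z u v : V}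
    (hz : ∀ a, K.Adj z a → a = x ∨ a = y) (hxy : ¬ K.Adj x y) {S : Finset V}
    (hS : (K ⊔ edge u v).IsNClique 4 S) : z ∉ S := by
  classical
  intro hzS
  have hzS' : (S.erase z).card = 3 := by rw [card_erase_of_mem hzS, hS.card_eq]
  obtain ⟨w, hw, hwxy⟩ := exists_mem_notMem_of_card_lt_card
    (s := {x, y}) (t := S.erase z) (by have := card_le_two (a := x) (b := y); omega)
  obtain ⟨hwz, hwS⟩ := mem_erase.1 hw
  have hclique : ∀ a ∈ S, ∀ b ∈ S, a ≠ b → (K ⊔ edge u v).Adj a b :=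
    fun a ha b hb hab => hS.isClique ha hb hab
  -- `z` has at most two `K`-neighbours in `S`, so the added edge must be `zw`.
  have huv : s(u, v) = s(z, w) := by
    rcases hclique z hzS w hwS (Ne.symm hwz) with h | h
    · exact absurd (hz w h) (by simpa using hwxy)
    · exact ((adj_edge _ _).1 h).1
  have hT : (S.erase z).erase w = {x, y} := by
    refine eq_of_subset_of_card_le (fun a ha => ?_) ?_
    · obtain ⟨haw, haz, haS⟩ : a ≠ w ∧ a ≠ z ∧ a ∈ S := by simpa using ha
      rcases hclique z hzS a haS (Ne.symm haz) with h | h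
      · simpa using hz a h
      · rw [adj_edge, huv, Sym2.congr_right] at h
        exact absurd h.1.symm haw
    · rw [card_erase_of_mem hw, hzS']
      exact card_le_two
  have hxT : x ∈ (S.erase z).erase w := by simp [hT]
  have hyT : y ∈ (S.erase z).erase w := by simp [hT]
  have hxy' : x ≠ y := by
    rintro rfl
    have := congrArg card hT
    rw [card_erase_of_mem hw, hzS', pair_eq_singleton] at this
    simp at this
  simp only [mem_erase] at hxT hyT
  rcases hclique x hxT.2.2 y hyT.2.2 hxy' with h | h
  · exact hxy h
  · rw [adj_edge, huv] at h
    rcases Sym2.eq_iff.1 h.1 with h' | h'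
    · exact hxT.2.1 h'.1.symm
    · exact hxT.1 h'.2.symm

section Cherry

variable {x y z : V}

theorem eq_or_eq_of_adj_sup_cherry {H : SimpleGraph V} (hz : ∀ a, ¬ H.Adj z a) {a : V}
    (h : (H ⊔ fromEdgeSet {s(x, z), s(y, z)}).Adj z a) : a = x ∨ a = y := by
  rcases h with h | h
  · exact absurd h (hz a)
  · simp only [fromEdgeSet_adj, Set.mem_insert_iff, Set.mem_singleton_iff, Sym2.eq_iff] at h
    grind

theorem mem_of_adj_cherry {a b : V} (h : (fromEdgeSet {s(x, z), s(y, z)}).Adj a b) :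
    z = a ∨ z = b := by
  simp only [fromEdgeSet_adj, Set.mem_insert_iff, Set.mem_singleton_iff, Sym2.eq_iff] at h
  grind

theorem bootStep_four_sup_cherry {H : SimpleGraph V} (hz : ∀ a, ¬ H.Adj z a)
    (hxy : ¬ H.Adj x y) (hxz : x ≠ z) (hyz : y ≠ z) :
    bootStep 4 (H ⊔ fromEdgeSet {s(x, z), s(y, z)}) =
      bootStep 4 H ⊔ fromEdgeSet {s(x, z), s(y, z)} := by
  refine le_antisymm (fun u v huv => ?_)
    (sup_le (bootStep_monotone 4 le_sup_left) (le_sup_right.trans (le_bootStep 4 _)))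
  rcases bootStep_adj.1 huv with h | ⟨huv, S, hS, hu, hv⟩
  · exact h.imp_left fun h => le_bootStep 4 H h
  have hzS : z ∉ S := by
    refine notMem_of_isNClique_four_sup_edge (fun a => eq_or_eq_of_adj_sup_cherry hz) ?_ hS
    rintro (h | h)
    · exact hxy h
    · simp only [fromEdgeSet_adj, Set.mem_insert_iff, Set.mem_singleton_iff, Sym2.eq_iff] at h
      grind
  refine .inl (bootStep_adj.2 (.inr ⟨huv, S, ⟨fun a ha b hb hab => ?_, hS.card_eq⟩, hu, hv⟩))
  rcases hS.isClique ha hb hab with (h | h) | h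
  · exact .inl h
  · exact absurd (mem_of_adj_cherry h) (by rintro (rfl | rfl) <;> contradiction)
  · exact .inr h

theorem iterate_bootStep_four_sup_cherry {G : SimpleGraph V} {m : ℕ}
    (hz : ∀ a, ¬ ((bootStep 4)^[m] G).Adj z a)
    (hxy : ∀ t < m, ¬ ((bootStep 4)^[t] G).Adj x y) (hxz : x ≠ z) (hyz : y ≠ z) :
    (bootStep 4)^[m] (G ⊔ fromEdgeSet {s(x, z), s(y, z)}) =
      (bootStep 4)^[m] G ⊔ fromEdgeSet {s(x, z), s(y, z)} := by
  induction m with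
  | zero => rfl
  | succ m ih =>
    have hz' : ∀ a, ¬ ((bootStep 4)^[m] G).Adj z a :=
      fun a h => hz a (iterate_bootStep_mono 4 G m.le_succ h)
    rw [Function.iterate_succ_apply', Function.iterate_succ_apply',
      ih hz' fun t ht => hxy t (ht.trans m.lt_succ_self),
      bootStep_four_sup_cherry hz' (hxy m m.lt_succ_self) hxz hyz]

theorem bootStep_four_sup_cherry_eq_top {K : SimpleGraph V}
    (hK : ∀ u v, u ≠ v → u ≠ z → v ≠ z → K.Adj u v) (hxy : x ≠ y) (hxz : x ≠ z) (hyz : y ≠ z) :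
    bootStep 4 (K ⊔ fromEdgeSet {s(x, z), s(y, z)}) = ⊤ := by
  classical
  have hjoin : ∀ u, u ≠ z → (bootStep 4 (K ⊔ fromEdgeSet {s(x, z), s(y, z)})).Adj u z := by
    intro u huz
    by_cases hu : u = x ∨ u = y
    · refine le_bootStep 4 _ (.inr ?_)
      simp only [fromEdgeSet_adj, Set.mem_insert_iff, Set.mem_singleton_iff, Sym2.eq_iff]
      grind
    refine bootStep_adj.2 (.inr ⟨huz, {u, x, y, z}, ?_, by simp, by simp⟩)
    rw [isNClique_iff]
    constructor
    · simp only [coe_insert, coe_singleton, isClique_insert, Set.mem_insert_iff,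
        Set.mem_singleton_iff, isClique_singleton, sup_adj, edge_adj, fromEdgeSet_adj, Sym2.eq_iff]
      grind
    · grind [card_insert_of_notMem, card_singleton]
  ext u v
  refine ⟨fun h => h.ne, fun huv => ?_⟩
  by_cases hvz : v = z
  · rw [hvz] at huv ⊢
    exact hjoin u huv
  by_cases huz : u = z
  · rw [huz] at huv ⊢
    exact (hjoin v huv.symm).symm
  · exact le_bootStep 4 _ (.inl (hK u v huv huz hvz))

end Cherry

end

theorem step_up_construction_general {V : Type*} [Fintype V] (n : ℕ) (hn : 4 ≤ n)
    (hcard : Fintype.card V = n + 1) (G : SimpleGraph V) (x y z : V)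
    (hcomplete : ∀ u v, ((bootStep 4)^[n - 3] G).Adj u v ↔ (u ≠ v ∧ u ≠ z ∧ v ≠ z))
    (hxy : ((bootStep 4)^[n - 3] G).Adj x y ∧ ¬ ((bootStep 4)^[n - 4] G).Adj x y) :
    (bootStep 4)^[n - 2] (G ⊔ SimpleGraph.fromEdgeSet {s(x, z), s(y, z)}) = ⊤ ∧
    (bootStep 4)^[n - 2] (G ⊔ SimpleGraph.fromEdgeSet {s(x, z), s(y, z)}) ≠
      (bootStep 4)^[n - 3] (G ⊔ SimpleGraph.fromEdgeSet {s(x, z), s(y, z)}) := by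
  classical
  obtain ⟨hxy_adj, hxy_new⟩ := hxy
  obtain ⟨hxy, hxz, hyz⟩ := (hcomplete x y).1 hxy_adj
  have hz : ∀ a, ¬ ((bootStep 4)^[n - 3] G).Adj z a := fun a h => ((hcomplete z a).1 h).2.1 rfl
  have hsplit := iterate_bootStep_four_sup_cherry hz
    (fun t ht h => hxy_new (iterate_bootStep_mono 4 G (by omega) h)) hxz hyz
  have htop : (bootStep 4)^[n - 2] (G ⊔ fromEdgeSet {s(x, z), s(y, z)}) = ⊤ := by
    rw [show n - 2 = n - 3 + 1 by omega, Function.iterate_succ_apply', hsplit]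
    exact bootStep_four_sup_cherry_eq_top (fun u v h hu hv => (hcomplete u v).2 ⟨h, hu, hv⟩)
      hxy hxz hyz
  refine ⟨htop, fun h => ?_⟩
  obtain ⟨w, -, hw⟩ := exists_mem_notMem_of_card_lt_card (s := {x, y, z}) (t := univ)
    (by grind [card_univ, card_le_three])
  simp only [mem_insert, mem_singleton, not_or] at hw
  have hzw : ((bootStep 4)^[n - 3] G ⊔ fromEdgeSet {s(x, z), s(y, z)}).Adj z w := by
    rw [← hsplit, ← h, htop]
    exact Ne.symm hw.2.2
  exact (eq_or_eq_of_adj_sup_cherry hz hzw).elim hw.1 hw.2.1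

/-- Extending a graph on `n` vertices by a new vertex `z` joined to the two endpoints `x, y`
of an edge appearing at the last step: if the `K_4`-bootstrap process starting from `G`
(a graph on the `n` vertices `≠ z`, with `z` isolated) has `G_{n-3}` equal to the complete
graph on the `n` old vertices, with the edge `xy` present at time `n-3` but not at time
`n-4`, then the process started from `G⁺ = G + xz + yz` has `G⁺_{n-2}` complete (on all
`n+1` vertices) and `G⁺_{n-2} ≠ G⁺_{n-3}`: it stabilizes at time exactly `n - 2` with
complete final graph. -/
theorem step_up_construction {V : Type*} [Fintype V] (n : ℕ) (hn : 4 ≤ n)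
    (hcard : Fintype.card V = n + 1) (G : SimpleGraph V) (x y z : V)
    (hz : ∀ u, ¬ G.Adj z u)
    (hcomplete : ∀ u v, ((bootStep 4)^[n - 3] G).Adj u v ↔ (u ≠ v ∧ u ≠ z ∧ v ≠ z))
    (hxy : ((bootStep 4)^[n - 3] G).Adj x y ∧ ¬ ((bootStep 4)^[n - 4] G).Adj x y) :
    (bootStep 4)^[n - 2] (G ⊔ SimpleGraph.fromEdgeSet {s(x, z), s(y, z)}) = ⊤ ∧
    (bootStep 4)^[n - 2] (G ⊔ SimpleGraph.fromEdgeSet {s(x, z), s(y, z)}) ≠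
      (bootStep 4)^[n - 3] (G ⊔ SimpleGraph.fromEdgeSet {s(x, z), s(y, z)}) :=
  step_up_construction_general n hn hcard G x y z hcomplete hxy
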